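/- arXiv:2504.19779 — 2 statements merged into one kernel-verified Lean document; each statement's English description precedes it below -/
import Mathlib

section
/- Let μ and ν be two probability measures on ℝ^d with densities p and q with respect to Lebesgue measure. Then the Jensen–Shannon divergence satisfies d_JS(μ,ν) ≤ (log 2 / 2) ∫_{{x : p(x)+q(x)>0}} (p(x)−q(x))² / (p(x)+q(x)) dx. -/
open MeasureTheory ProbabilityTheory
open scoped ENNReal Classical

noncomputable section

abbrev E (d : ℕ) := EuclideanSpace ℝ (Fin d)

def cube (d : ℕ) : Set (E d) := {x | ∀ i, x i ∈ Set.Icc (0:ℝ) 1}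

def lam (d : ℕ) : Measure (E d) := volume.restrict (cube d)

def KL {d : ℕ} (ν μ : Measure (E d)) : ℝ := ∫ x, Real.log ((ν.rnDeriv μ) x).toReal ∂ν

def JS {d : ℕ} (μ ν : Measure (E d)) : ℝ :=
  (1/2) * (KL ν ((2:ℝ≥0∞)⁻¹ • (μ + ν)) + KL μ ((2:ℝ≥0∞)⁻¹ • (μ + ν)))

def ganLoss {d : ℕ} (μstar : Measure (E d)) (G : E d → E d) (D : E d → ℝ) : ℝ :=
  (1/2) * ((∫ y, Real.log (D y) ∂μstar) + ∫ z, Real.log (1 - D (G z)) ∂(lam d))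

def hessW {d : ℕ} (φ : E d → ℝ) (x : E d) : E d →L[ℝ] E d →L[ℝ] ℝ :=
  fderivWithin ℝ (fun y => fderivWithin ℝ φ (cube d) y) (cube d) x

def gradW {d : ℕ} (φ : E d → ℝ) (x : E d) : E d :=
  (InnerProductSpace.toDual ℝ (E d)).symm (fderivWithin ℝ φ (cube d) x)

def hessMat {d : ℕ} (φ : E d → ℝ) (x : E d) : Matrix (Fin d) (Fin d) ℝ :=
  fun i j => hessW φ x (EuclideanSpace.single i 1) (EuclideanSpace.single j 1)

def C2norm {d : ℕ} (φ : E d → ℝ) : ℝ :=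
  ⨆ k : Fin 3, ⨆ x : cube d, ‖iteratedFDerivWithin ℝ (k : ℕ) φ (cube d) (x : E d)‖

def C21norm {d : ℕ} (φ : E d → ℝ) : ℝ :=
  C2norm φ + ⨆ p : cube d × cube d,
    ‖iteratedFDerivWithin ℝ 2 φ (cube d) (p.1 : E d) - iteratedFDerivWithin ℝ 2 φ (cube d) (p.2 : E d)‖
      / ‖(p.1 : E d) - (p.2 : E d)‖

def Pen {d : ℕ} (κ : ℝ) (φ : E d → ℝ) : ℝ :=
  ∫ u, max 0 (φ ((2:ℝ)⁻¹ • (u.1 + u.2)) - (φ u.1 + φ u.2)/2 + (κ/8) * ‖u.1 - u.2‖^2)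
    ∂((volume.restrict (cube d)).prod (volume.restrict (cube d)))

/-! With `m = (p + q) / 2` and `t = (p - q) / (p + q)`, the integrand `q log (q / m) + p log (p / m)`
of `2 d_JS` equals `m h(t)`, where `h(t) = (1 + t) log (1 + t) + (1 - t) log (1 - t)`.
The expansion `h(t) = ∑ t ^ (2k + 2) / ((k + 1)(2k + 1))` shows that `h(t) / t²` increases on
`[0, 1)`, so `h(t) ≤ h(1) t² = 2 log 2 t²`, and `m · 2 log 2 · t² = log 2 (p - q)² / (p + q)`. -/

section
open Real

noncomputable def symmMulLog (t : ℝ) : ℝ := (1 + t) * log (1 + t) + (1 - t) * log (1 - t)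

namespace symmMulLog

theorem hasSum {t : ℝ} (ht : |t| < 1) :
    HasSum (fun k : ℕ => t ^ (2 * k + 2) / ((k + 1) * (2 * k + 1))) (symmMulLog t) := by
  have ht2 : |t ^ 2| < 1 := by rw [abs_pow, sq_lt_one_iff₀ (abs_nonneg t)]; exact ht
  have hodd := (hasSum_log_sub_log_of_abs_lt_one ht).mul_left t
  have heven := hasSum_pow_div_log_of_abs_lt_one ht2
  have hpos : 0 < 1 + t ∧ 0 < 1 - t := by constructor <;> linarith [abs_lt.1 ht]
  have hsum : t * (log (1 + t) - log (1 - t)) - -log (1 - t ^ 2) = symmMulLog t := by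
    rw [symmMulLog, show 1 - t ^ 2 = (1 + t) * (1 - t) by ring, log_mul hpos.1.ne' hpos.2.ne']
    ring
  rw [← hsum]
  refine (hodd.sub heven).congr_fun fun k => ?_
  rw [← pow_mul]
  field_simp
  ring

theorem neg (t : ℝ) : symmMulLog (-t) = symmMulLog t := by
  simp only [symmMulLog, sub_neg_eq_add, ← sub_eq_add_neg]
  ring

theorem one : symmMulLog 1 = 2 * log 2 := by norm_num [symmMulLog]

theorem continuous : Continuous symmMulLog :=
  (continuous_mul_log.comp (continuous_const.add continuous_id)).add
    (continuous_mul_log.comp (continuous_const.sub continuous_id))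

-- `symmMulLog t / t ^ 2` is a power series in `t ^ 2` with nonnegative coefficients.
theorem sq_mul_le_sq_mul {x y : ℝ} (hx : 0 ≤ x) (hxy : x ≤ y) (hy : y < 1) :
    y ^ 2 * symmMulLog x ≤ x ^ 2 * symmMulLog y := by
  have hxa : |x| < 1 := by rw [abs_of_nonneg hx]; linarith
  have hya : |y| < 1 := by rw [abs_of_nonneg (hx.trans hxy)]; exact hy
  refine hasSum_le (fun k => ?_) ((hasSum hxa).mul_left _) ((hasSum hya).mul_left _)
  have hpow : x ^ (2 * k) ≤ y ^ (2 * k) := pow_le_pow_left₀ hx hxy _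
  calc y ^ 2 * (x ^ (2 * k + 2) / ((k + 1) * (2 * k + 1)))
      = (x * y) ^ 2 * x ^ (2 * k) / ((k + 1) * (2 * k + 1)) := by ring
    _ ≤ (x * y) ^ 2 * y ^ (2 * k) / ((k + 1) * (2 * k + 1)) := by gcongr
    _ = x ^ 2 * (y ^ (2 * k + 2) / ((k + 1) * (2 * k + 1))) := by ring

theorem le_two_mul_log_two_mul_sq {t : ℝ} (ht : |t| ≤ 1) : symmMulLog t ≤ 2 * log 2 * t ^ 2 := by
  wlog ht0 : 0 ≤ t generalizing t
  · simpa [neg] using this (t := -t) (by rwa [abs_neg]) (by linarith)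
  rcases (abs_le.1 ht).2.lt_or_eq with ht1 | rfl
  · have hmem : (1 : ℝ) ∈ closure (Set.Ico t 1) := by
      rw [closure_Ico ht1.ne]; exact ⟨ht1.le, le_rfl⟩
    have := ContinuousWithinAt.closure_le hmem (by fun_prop)
      ((continuous.continuousWithinAt).const_mul (t ^ 2)) fun y hy => sq_mul_le_sq_mul ht0 hy.1 hy.2
    rw [one] at this
    linarith
  · rw [one]; norm_num

end symmMulLog

theorem mul_log_div_midpoint_add_le {a b : ℝ} (ha : 0 ≤ a) (hb : 0 ≤ b) :
    a * log (a / ((a + b) / 2)) + b * log (b / ((a + b) / 2)) ≤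
      log 2 * ((a - b) ^ 2 / (a + b)) := by
  rcases (add_nonneg ha hb).eq_or_lt with hab | hab
  · obtain rfl : a = 0 := by linarith
    obtain rfl : b = 0 := by linarith
    simp
  set t := (a - b) / (a + b) with ht_def
  have hta : a / ((a + b) / 2) = 1 + t := by rw [ht_def]; field_simp; ring
  have htb : b / ((a + b) / 2) = 1 - t := by rw [ht_def]; field_simp; ring
  have ht : |t| ≤ 1 := by
    rw [abs_le, ht_def, le_div_iff₀ hab, div_le_iff₀ hab]; constructor <;> linarith
  calc a * log (a / ((a + b) / 2)) + b * log (b / ((a + b) / 2))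
      = (a + b) / 2 * symmMulLog t := by
        rw [symmMulLog, ← hta, ← htb]
        field_simp
    _ ≤ (a + b) / 2 * (2 * log 2 * t ^ 2) := by
        gcongr; exact symmMulLog.le_two_mul_log_two_mul_sq ht
    _ = log 2 * ((a - b) ^ 2 / (a + b)) := by rw [ht_def]; field_simp

theorem abs_mul_log_div_le {a m : ℝ} (ha : 0 ≤ a) (ham : a ≤ 2 * m) :
    |a * log (a / m)| ≤ 2 * m := by
  rcases ha.eq_or_lt with rfl | ha
  · simpa using ham
  have hm : 0 < m := by linarith
  have hr : 0 < a / m := by positivity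
  have hlow := mul_le_mul_of_nonneg_left (one_sub_inv_le_log_of_pos hr) ha.le
  have hup := mul_le_mul_of_nonneg_left (log_le_sub_one_of_pos hr) ha.le
  have hlow' : a * (1 - (a / m)⁻¹) = a - m := by field_simp
  have hup' : a * (a / m - 1) ≤ a * 1 :=
    mul_le_mul_of_nonneg_left (by rw [sub_le_iff_le_add, div_le_iff₀ hm]; linarith) ha.le
  rw [abs_le]; constructor <;> nlinarith

theorem sq_sub_div_add_le_add {a b : ℝ} (ha : 0 ≤ a) (hb : 0 ≤ b) :
    (a - b) ^ 2 / (a + b) ≤ a + b :=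
  div_le_of_le_mul₀ (add_nonneg ha hb) (add_nonneg ha hb) (by nlinarith)

end

theorem integrable_mul_log_div {α : Type*} [MeasurableSpace α] {ρ : Measure α} {a m : α → ℝ}
    (ha : Measurable a) (hm : Measurable m) (hm_int : Integrable m ρ) (ha0 : ∀ x, 0 ≤ a x)
    (ham : ∀ x, a x ≤ 2 * m x) : Integrable (fun x => a x * Real.log (a x / m x)) ρ :=
  (hm_int.const_mul 2).mono' (ha.mul (ha.div hm).log).aestronglyMeasurable
    (ae_of_all _ fun x => abs_mul_log_div_le (ha0 x) (ham x))

theorem integrable_sq_sub_div_add {α : Type*} [MeasurableSpace α] {ρ : Measure α}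
    {a b : α → ℝ} (ha : Measurable a) (hb : Measurable b) (ha_int : Integrable a ρ)
    (hb_int : Integrable b ρ) (ha0 : ∀ x, 0 ≤ a x) (hb0 : ∀ x, 0 ≤ b x) :
    Integrable (fun x => (a x - b x) ^ 2 / (a x + b x)) ρ :=
  (ha_int.add hb_int).mono' (((ha.sub hb).pow_const 2).div (ha.add hb)).aestronglyMeasurable
    (ae_of_all _ fun x => by
      rw [Real.norm_of_nonneg (div_nonneg (sq_nonneg _) (add_nonneg (ha0 x) (hb0 x)))]
      exact sq_sub_div_add_le_add (ha0 x) (hb0 x))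

theorem integrable_of_isFiniteMeasure_withDensity_ofReal {α : Type*} [MeasurableSpace α]
    {ρ : Measure α} {f : α → ℝ} [IsFiniteMeasure (ρ.withDensity fun x => ENNReal.ofReal (f x))]
    (hf : AEStronglyMeasurable f ρ) (hf0 : 0 ≤ᵐ[ρ] f) : Integrable f ρ :=
  ⟨hf, (hasFiniteIntegral_iff_ofReal hf0).2 <| by
    simpa [withDensity_apply] using
      measure_lt_top (ρ.withDensity fun x => ENNReal.ofReal (f x)) .univ⟩

theorem inv_two_smul_add_withDensity_ofReal {α : Type*} [MeasurableSpace α] (ρ : Measure α)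
    {f g : α → ℝ} (hf : Measurable f) (hf0 : ∀ x, 0 ≤ f x) (hg0 : ∀ x, 0 ≤ g x) :
    (2 : ℝ≥0∞)⁻¹ • (ρ.withDensity (fun x => ENNReal.ofReal (f x)) +
      ρ.withDensity fun x => ENNReal.ofReal (g x)) =
      ρ.withDensity fun x => ENNReal.ofReal ((f x + g x) / 2) := by
  rw [← withDensity_add_left hf.ennreal_ofReal, ← withDensity_smul' _ _ (by simp)]
  congr 1
  funext x
  rw [Pi.smul_apply, Pi.add_apply, smul_eq_mul, ← ENNReal.ofReal_add (hf0 x) (hg0 x),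
    div_eq_mul_inv, ENNReal.ofReal_mul (add_nonneg (hf0 x) (hg0 x)), mul_comm,
    ENNReal.ofReal_inv_of_pos two_pos]
  simp

theorem KL_withDensity_ofReal {d : ℕ} (ρ : Measure (E d)) [SigmaFinite ρ] {f g : E d → ℝ}
    (hf : Measurable f) (hg : Measurable g) (hf0 : ∀ x, 0 ≤ f x) (hg0 : ∀ x, 0 ≤ g x)
    (hgf : ∀ x, f x = 0 → g x = 0) :
    KL (ρ.withDensity fun x => ENNReal.ofReal (g x))
        (ρ.withDensity fun x => ENNReal.ofReal (f x)) = ∫ x, g x * Real.log (g x / f x) ∂ρ := by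
  have hdiv_meas : Measurable fun x => g x / f x := hg.div hf
  have hdens : (ρ.withDensity fun x => ENNReal.ofReal (f x)).withDensity
      (fun x => ENNReal.ofReal (g x / f x)) = ρ.withDensity fun x => ENNReal.ofReal (g x) := by
    rw [← withDensity_mul _ hf.ennreal_ofReal hdiv_meas.ennreal_ofReal]
    congr 1
    funext x
    rw [Pi.mul_apply, ← ENNReal.ofReal_mul (hf0 x)]
    rcases (hf0 x).eq_or_lt with h | h
    · simp [← h, hgf x h.symm]
    · rw [mul_div_cancel₀ _ h.ne']
  have hrn : (ρ.withDensity fun x => ENNReal.ofReal (g x)).rnDeriv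
      (ρ.withDensity fun x => ENNReal.ofReal (f x)) =ᵐ[ρ.withDensity fun x => ENNReal.ofReal (g x)]
      fun x => ENNReal.ofReal (g x / f x) := by
    rw [← hdens]
    exact (withDensity_absolutelyContinuous _ _).ae_le
      (Measure.rnDeriv_withDensity _ hdiv_meas.ennreal_ofReal)
  rw [KL, integral_congr_ae (hrn.mono fun x hx => by rw [hx]),
    integral_withDensity_eq_integral_toReal_smul hg.ennreal_ofReal
      (ae_of_all _ fun _ => ENNReal.ofReal_lt_top)]
  refine integral_congr_ae (ae_of_all _ fun x => ?_)
  simp only [smul_eq_mul, ENNReal.toReal_ofReal (hg0 x),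
    ENNReal.toReal_ofReal (div_nonneg (hg0 x) (hf0 x))]

/-- `d_JS(μ,ν) ≤ (log 2 / 2) ∫_{p+q>0} (p−q)²/(p+q)`. -/
theorem stmt2 {d : ℕ} (μ ν : Measure (E d))
    [IsProbabilityMeasure μ] [IsProbabilityMeasure ν]
    (p q : E d → ℝ) (hp_meas : Measurable p) (hq_meas : Measurable q)
    (hp_nonneg : ∀ x, 0 ≤ p x) (hq_nonneg : ∀ x, 0 ≤ q x)
    (hμ : μ = volume.withDensity (fun x => ENNReal.ofReal (p x)))
    (hν : ν = volume.withDensity (fun x => ENNReal.ofReal (q x))) :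
    JS μ ν ≤ (Real.log 2 / 2) *
      ∫ x in {x : E d | 0 < p x + q x}, (p x - q x)^2 / (p x + q x) := by
  subst hμ hν
  have hp_int : Integrable p := integrable_of_isFiniteMeasure_withDensity_ofReal
    hp_meas.aestronglyMeasurable (ae_of_all _ hp_nonneg)
  have hq_int : Integrable q := integrable_of_isFiniteMeasure_withDensity_ofReal
    hq_meas.aestronglyMeasurable (ae_of_all _ hq_nonneg)
  have hm_meas : Measurable fun x => (p x + q x) / 2 := by fun_prop
  have hm_nonneg : ∀ x, 0 ≤ (p x + q x) / 2 := fun x => by linarith [hp_nonneg x, hq_nonneg x]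
  have hp_le : ∀ x, p x ≤ 2 * ((p x + q x) / 2) := fun x => by linarith [hq_nonneg x]
  have hq_le : ∀ x, q x ≤ 2 * ((p x + q x) / 2) := fun x => by linarith [hp_nonneg x]
  have hp_log_int := integrable_mul_log_div hp_meas hm_meas ((hp_int.add hq_int).div_const 2)
    hp_nonneg hp_le
  have hq_log_int := integrable_mul_log_div hq_meas hm_meas ((hp_int.add hq_int).div_const 2)
    hq_nonneg hq_le
  have hR_int := integrable_sq_sub_div_add hp_meas hq_meas hp_int hq_int hp_nonneg hq_nonneg
  rw [JS, inv_two_smul_add_withDensity_ofReal _ hp_meas hp_nonneg hq_nonneg,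
    KL_withDensity_ofReal _ hm_meas hq_meas hm_nonneg hq_nonneg
      (fun x hx => by linarith [hp_nonneg x, hq_nonneg x]),
    KL_withDensity_ofReal _ hm_meas hp_meas hm_nonneg hp_nonneg
      (fun x hx => by linarith [hp_nonneg x, hq_nonneg x]),
    setIntegral_eq_integral_of_forall_compl_eq_zero fun x hx => by
      rw [le_antisymm (not_lt.1 hx) (add_nonneg (hp_nonneg x) (hq_nonneg x)), div_zero],
    ← integral_add hq_log_int hp_log_int, ← integral_const_mul, ← integral_const_mul]
  refine integral_mono ((hq_log_int.add hp_log_int).const_mul _) (hR_int.const_mul _) fun x => ?_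
  linarith [mul_log_div_midpoint_add_le (hp_nonneg x) (hq_nonneg x)]

end
end

section
/- Let M>0 and let φ∈C²([0,1]^d,ℝ) satisfy Hess φ(x) ≥ (1/M)·Id for all x∈[0,1]^d, and let λ denote Lebesgue measure on [0,1]^d. Then ∇φ:[0,1]^d→∇φ([0,1]^d) is bijective and the pushforward measure (∇φ)_#λ is absolutely continuous with density p(x) = 1/|det[Hess φ((∇φ)^{-1}(x))]| for x∈∇φ([0,1]^d) (and p=0 outside), and p(x) ≤ M^d for all x∈∇φ([0,1]^d). If additionally Hess φ(x) ≤ M·Id for all x∈[0,1]^d, then p(x) ≥ M^{−d} for all x∈∇φ([0,1]^d). -/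
open MeasureTheory ProbabilityTheory
open scoped ENNReal Classical

noncomputable section

/-!
Strong convexity makes `t ↦ ⟨∇φ(b + t(a - b)), a - b⟩` strictly increasing on `[0, 1]`, so `∇φ`
is injective on the convex cube. As `φ` is `C²` up to the boundary, its Hessian is symmetric; its
determinant is the product of its eigenvalues, which lie in `[1/M, M]`. The change of variables
formula for injective differentiable maps then shows that `(∇φ)_#λ` has density
`|det Hess φ|⁻¹ ∘ (∇φ)⁻¹` on the image.
-/

open Set Function Module
open scoped RealInnerProductSpace

section DetBounds

variable {F : Type*} [NormedAddCommGroup F] [InnerProductSpace ℝ F] [FiniteDimensional ℝ F]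
  {T : F →ₗ[ℝ] F}

lemma LinearMap.IsSymmetric.eigenvalues_eq_inner (hT : T.IsSymmetric) (i : Fin (finrank ℝ F)) :
    hT.eigenvalues rfl i = ⟪T (hT.eigenvectorBasis rfl i), hT.eigenvectorBasis rfl i⟫ := by
  rw [hT.apply_eigenvectorBasis, real_inner_smul_left, real_inner_self_eq_norm_sq,
    (hT.eigenvectorBasis rfl).orthonormal.1 i]
  simp

lemma LinearMap.IsSymmetric.pow_finrank_le_det (hT : T.IsSymmetric) {c : ℝ} (hc : 0 ≤ c)
    (h : ∀ v, c * ‖v‖ ^ 2 ≤ ⟪T v, v⟫) : c ^ finrank ℝ F ≤ T.det := by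
  have hc_le (i) : c ≤ hT.eigenvalues rfl i := by
    have := h (hT.eigenvectorBasis rfl i)
    rwa [(hT.eigenvectorBasis rfl).orthonormal.1 i, one_pow, mul_one,
      ← hT.eigenvalues_eq_inner] at this
  calc c ^ finrank ℝ F = ∏ _i : Fin (finrank ℝ F), c := by simp
    _ ≤ ∏ i, hT.eigenvalues rfl i := Finset.prod_le_prod (fun _ _ => hc) (fun i _ => hc_le i)
    _ = T.det := (hT.det_eq_prod_eigenvalues rfl).symm

lemma LinearMap.IsSymmetric.det_le_pow_finrank (hT : T.IsSymmetric) {C : ℝ}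
    (h₀ : ∀ v, 0 ≤ ⟪T v, v⟫) (h : ∀ v, ⟪T v, v⟫ ≤ C * ‖v‖ ^ 2) : T.det ≤ C ^ finrank ℝ F := by
  have hle (i) : hT.eigenvalues rfl i ≤ C := by
    have := h (hT.eigenvectorBasis rfl i)
    rwa [(hT.eigenvectorBasis rfl).orthonormal.1 i, one_pow, mul_one,
      ← hT.eigenvalues_eq_inner] at this
  calc T.det = ∏ i, hT.eigenvalues rfl i := hT.det_eq_prod_eigenvalues rfl
    _ ≤ ∏ _i : Fin (finrank ℝ F), C :=
      Finset.prod_le_prod (fun i _ => hT.eigenvalues_eq_inner i ▸ h₀ _) (fun i _ => hle i)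
    _ = C ^ finrank ℝ F := by simp

end DetBounds

section StrictMonotoneGradient

variable {F : Type*} [NormedAddCommGroup F] [NormedSpace ℝ F] {s : Set F}
  {G : F → StrongDual ℝ F} {G' : F → F →L[ℝ] StrongDual ℝ F}

lemma Convex.injOn_of_hasFDerivWithinAt_of_apply_self_pos (hs : Convex ℝ s)
    (hG : ∀ x ∈ s, HasFDerivWithinAt G (G' x) s x) (hpos : ∀ x ∈ s, ∀ v ≠ 0, 0 < G' x v v) :
    InjOn G s := by
  intro a ha b hb hab
  by_contra hne
  set v := a - b
  have hv : v ≠ 0 := sub_ne_zero.2 hne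
  set γ : ℝ → F := fun t => b + t • v
  have hγ : MapsTo γ (Icc 0 1) s := fun t ht => by
    simpa [γ, v, AffineMap.lineMap_apply_module', add_comm, smul_sub] using
      hs.lineMap_mem hb ha ht
  have hderiv : ∀ t ∈ Icc (0 : ℝ) 1,
      HasDerivWithinAt (fun t => G (γ t) v) (G' (γ t) v v) (Icc 0 1) t := fun t ht => by
    have hγ' : HasDerivWithinAt γ v (Icc 0 1) t :=
      (((hasDerivAt_id t).smul_const v).const_add b).hasDerivWithinAt.congr_deriv (one_smul _ _)
    simpa using ((hG _ (hγ ht)).comp_hasDerivWithinAt t hγ' hγ).clm_apply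
      (hasDerivWithinAt_const t _ v)
  have hmono : StrictMonoOn (fun t => G (γ t) v) (Icc 0 1) :=
    strictMonoOn_of_hasDerivWithinAt_pos (convex_Icc 0 1)
      (fun t ht => (hderiv t ht).continuousWithinAt)
      (fun t ht => (hderiv t (interior_subset ht)).mono interior_subset)
      (fun t ht => hpos _ (hγ (interior_subset ht)) v hv)
  have h01 := hmono (left_mem_Icc.2 zero_le_one) (right_mem_Icc.2 zero_le_one) one_pos
  simp [γ, v, hab] at h01

end StrictMonotoneGradient

section ChangeOfVariables

variable {F : Type*} [NormedAddCommGroup F] [NormedSpace ℝ F] [FiniteDimensional ℝ F]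
  [MeasurableSpace F] [BorelSpace F] (μ : Measure F) [μ.IsAddHaarMeasure]
  {s : Set F} {f : F → F} {f' : F → F →L[ℝ] F}

theorem map_restrict_eq_withDensity_inv_abs_det (hs : MeasurableSet s)
    (hf' : ∀ x ∈ s, HasFDerivWithinAt f (f' x) s x) (hf : InjOn f s)
    (hdet : ∀ x ∈ s, (f' x).det ≠ 0) :
    (μ.restrict s).map f =
      μ.withDensity ((f '' s).indicator fun y => ENNReal.ofReal |(f' (invFunOn f s y)).det|⁻¹) := by
  set ρ : F → ℝ≥0∞ := fun y => ENNReal.ofReal |(f' (invFunOn f s y)).det|⁻¹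
  have hf_meas : AEMeasurable f (μ.restrict s) :=
    ContinuousOn.aemeasurable (fun x hx => (hf' x hx).continuousWithinAt) hs
  have himg : MeasurableSet (f '' s) := measurable_image_of_fderivWithin hs hf' hf
  have hρ (x) (hx : x ∈ s) : ENNReal.ofReal |(f' x).det| * ρ (f x) = 1 := by
    rw [← ENNReal.ofReal_mul (abs_nonneg _), hf.leftInvOn_invFunOn hx,
      mul_inv_cancel₀ (abs_ne_zero.2 (hdet x hx)), ENNReal.ofReal_one]
  ext t ht
  rw [Measure.map_apply_of_aemeasurable hf_meas ht, withDensity_apply _ ht]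
  calc μ.restrict s (f ⁻¹' t)
      = ∫⁻ x in s, (f ⁻¹' t).indicator 1 x ∂μ :=
        (lintegral_indicator_one₀ (hf_meas.nullMeasurableSet_preimage ht)).symm
    _ = ∫⁻ x in s, ENNReal.ofReal |(f' x).det| * t.indicator ρ (f x) ∂μ := by
        refine setLIntegral_congr_fun hs fun x hx => ?_
        by_cases hxt : f x ∈ t
        · simp [indicator_of_mem hxt, indicator_of_mem (show x ∈ f ⁻¹' t from hxt), hρ x hx]
        · simp [indicator_of_notMem hxt, indicator_of_notMem (show x ∉ f ⁻¹' t from hxt)]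
    _ = ∫⁻ y in f '' s, t.indicator ρ y ∂μ :=
        (lintegral_image_eq_lintegral_abs_det_fderiv_mul μ hs hf' hf _).symm
    _ = ∫⁻ y in t, (f '' s).indicator ρ y ∂μ := by
        rw [← lintegral_indicator himg, ← lintegral_indicator ht, indicator_indicator,
          indicator_indicator, inter_comm]

end ChangeOfVariables

section Cube

variable {d : ℕ}

lemma cube_eq_preimage_Icc : cube d = EuclideanSpace.equiv (Fin d) ℝ ⁻¹' Icc 0 1 := by
  ext x
  simp [cube, Pi.le_def, forall_and]

lemma convex_cube : Convex ℝ (cube d) := by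
  rw [cube_eq_preimage_Icc]
  exact (convex_Icc 0 1).linear_preimage (EuclideanSpace.equiv (Fin d) ℝ).toLinearMap

lemma measurableSet_cube : MeasurableSet (cube d) := by
  rw [cube_eq_preimage_Icc]
  exact (isClosed_Icc.preimage (EuclideanSpace.equiv (Fin d) ℝ).continuous).measurableSet

lemma interior_cube_nonempty : (interior (cube d)).Nonempty := by
  rw [cube_eq_preimage_Icc]
  refine Nonempty.mono
    (preimage_interior_subset_interior_preimage (EuclideanSpace.equiv (Fin d) ℝ).continuous) ?_
  rw [← pi_univ_Icc, interior_pi_set finite_univ]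
  exact ⟨(EuclideanSpace.equiv (Fin d) ℝ).symm fun _ => 1 / 2, by norm_num⟩

lemma uniqueDiffOn_cube : UniqueDiffOn ℝ (cube d) :=
  uniqueDiffOn_convex convex_cube interior_cube_nonempty

lemma cube_subset_closure_interior : cube d ⊆ closure (interior (cube d)) := by
  rw [convex_cube.closure_interior_eq_closure_of_nonempty_interior interior_cube_nonempty]
  exact subset_closure

end Cube

section Hessian

variable {d : ℕ} {φ : E d → ℝ} {x : E d}

-- Over `ℝ` the conjugate-linear Riesz map `toDual.symm` is linear; the ascription records this.
def rieszCLM (d : ℕ) : StrongDual ℝ (E d) →L[ℝ] E d :=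
  (InnerProductSpace.toDual ℝ (E d)).symm.toLinearIsometry.toContinuousLinearMap

def hessOp (φ : E d → ℝ) (x : E d) : E d →L[ℝ] E d := (rieszCLM d).comp (hessW φ x)

lemma inner_hessOp_apply (u v : E d) : ⟪hessOp φ x u, v⟫ = hessW φ x u v :=
  InnerProductSpace.toDual_symm_apply (y := hessW φ x u)

lemma hasFDerivWithinAt_fderivWithin_cube (hφ : ContDiffOn ℝ 2 φ (cube d)) (hx : x ∈ cube d) :
    HasFDerivWithinAt (fderivWithin ℝ φ (cube d)) (hessW φ x) (cube d) x :=
  ((hφ.fderivWithin uniqueDiffOn_cube (m := 1) le_rfl).differentiableOn one_ne_zero x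
    hx).hasFDerivWithinAt

lemma hasFDerivWithinAt_gradW (hφ : ContDiffOn ℝ 2 φ (cube d)) (hx : x ∈ cube d) :
    HasFDerivWithinAt (gradW φ) (hessOp φ x) (cube d) x :=
  (rieszCLM d).hasFDerivAt.comp_hasFDerivWithinAt x (hasFDerivWithinAt_fderivWithin_cube hφ hx)

lemma isSymmetric_hessOp (hφ : ContDiffOn ℝ 2 φ (cube d)) (hx : x ∈ cube d) :
    (hessOp φ x : E d →ₗ[ℝ] E d).IsSymmetric := by
  have hsymm : IsSymmSndFDerivWithinAt ℝ φ (cube d) x :=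
    (hφ x hx).isSymmSndFDerivWithinAt (by simp) uniqueDiffOn_cube
      (cube_subset_closure_interior hx) hx
  intro u v
  rw [ContinuousLinearMap.coe_coe, real_inner_comm (hessOp φ x v) u, inner_hessOp_apply,
    inner_hessOp_apply]
  exact hsymm u v

lemma det_hessOp : (hessOp φ x).det = (hessMat φ x).det := by
  let b := (EuclideanSpace.basisFun (Fin d) ℝ)
  have hmat : LinearMap.toMatrix b.toBasis b.toBasis (hessOp φ x) = (hessMat φ x).transpose := by
    ext i j
    rw [LinearMap.toMatrix_apply, OrthonormalBasis.coe_toBasis_repr_apply,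
      OrthonormalBasis.repr_apply_apply, OrthonormalBasis.coe_toBasis, real_inner_comm,
      ContinuousLinearMap.coe_coe, inner_hessOp_apply]
    simp [b, hessMat]
  rw [ContinuousLinearMap.det, ← LinearMap.det_toMatrix b.toBasis, hmat, Matrix.det_transpose]

lemma injOn_gradW (hφ : ContDiffOn ℝ 2 φ (cube d))
    (hpos : ∀ x ∈ cube d, ∀ v ≠ 0, 0 < hessW φ x v v) : InjOn (gradW φ) (cube d) :=
  ((InnerProductSpace.toDual ℝ (E d)).symm.injective.comp_injOn
    (convex_cube.injOn_of_hasFDerivWithinAt_of_apply_self_pos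
      (fun _ hx => hasFDerivWithinAt_fderivWithin_cube hφ hx) hpos))

lemma pow_le_det_hessMat (hφ : ContDiffOn ℝ 2 φ (cube d)) (hx : x ∈ cube d) {c : ℝ} (hc : 0 ≤ c)
    (h : ∀ v, c * ‖v‖ ^ 2 ≤ hessW φ x v v) : c ^ d ≤ (hessMat φ x).det := by
  have := (isSymmetric_hessOp hφ hx).pow_finrank_le_det hc
    fun v => (h v).trans_eq (inner_hessOp_apply v v).symm
  rwa [finrank_euclideanSpace_fin, ← ContinuousLinearMap.det, det_hessOp] at this

lemma det_hessMat_le_pow (hφ : ContDiffOn ℝ 2 φ (cube d)) (hx : x ∈ cube d) {C : ℝ}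
    (h₀ : ∀ v, 0 ≤ hessW φ x v v) (h : ∀ v, hessW φ x v v ≤ C * ‖v‖ ^ 2) :
    (hessMat φ x).det ≤ C ^ d := by
  have := (isSymmetric_hessOp hφ hx).det_le_pow_finrank
    (fun v => (h₀ v).trans_eq (inner_hessOp_apply v v).symm)
    fun v => (inner_hessOp_apply v v).trans_le (h v)
  rwa [finrank_euclideanSpace_fin, ← ContinuousLinearMap.det, det_hessOp] at this

end Hessian

/-- a gradient of a `C²` function with Hessian `≥ (1/M)·Id` on the cube is a
bijection onto its image, the pushforward of Lebesgue measure on the cube has density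
`p(x) = 1/|det Hess φ((∇φ)⁻¹(x))|` on the image (and `0` outside), with `p ≤ M^d`;
if additionally `Hess φ ≤ M·Id` then `p ≥ (1/M)^d` on the image. -/
theorem stmt4 {d : ℕ} (M : ℝ) (hM : 0 < M) (φ : E d → ℝ)
    (hφ : ContDiffOn ℝ 2 φ (cube d))
    (hconv : ∀ x ∈ cube d, ∀ v : E d, (1/M) * ‖v‖^2 ≤ hessW φ x v v)
    (p : E d → ℝ)
    (hp : ∀ x, p x = if x ∈ gradW φ '' cube d then
        1 / |(hessMat φ (Function.invFunOn (gradW φ) (cube d) x)).det| else 0) :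
    Set.BijOn (gradW φ) (cube d) (gradW φ '' cube d) ∧
    (lam d).map (gradW φ) = volume.withDensity (fun x => ENNReal.ofReal (p x)) ∧
    (∀ x ∈ gradW φ '' cube d, p x ≤ M ^ d) ∧
    ((∀ x ∈ cube d, ∀ v : E d, hessW φ x v v ≤ M * ‖v‖^2) →
      ∀ x ∈ gradW φ '' cube d, (1/M) ^ d ≤ p x) := by
  have hdet_ge (x) (hx : x ∈ cube d) : (1 / M) ^ d ≤ (hessMat φ x).det :=
    pow_le_det_hessMat hφ hx (by positivity) (hconv x hx)
  have hdet_pos (x) (hx : x ∈ cube d) : 0 < (hessMat φ x).det :=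
    (pow_pos (by positivity) d).trans_le (hdet_ge x hx)
  have hinj : InjOn (gradW φ) (cube d) := injOn_gradW hφ fun x hx v hv =>
    (by positivity : 0 < 1 / M * ‖v‖ ^ 2).trans_le (hconv x hx v)
  have hp_gradW (x) (hx : x ∈ cube d) : p (gradW φ x) = 1 / (hessMat φ x).det := by
    rw [hp, if_pos (mem_image_of_mem _ hx), hinj.leftInvOn_invFunOn hx,
      abs_of_pos (hdet_pos x hx)]
  refine ⟨hinj.bijOn_image, ?_, ?_, fun hupper => ?_⟩
  · rw [lam, map_restrict_eq_withDensity_inv_abs_det volume measurableSet_cube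
      (fun x hx => hasFDerivWithinAt_gradW hφ hx) hinj
      (fun x hx => det_hessOp (φ := φ) ▸ (hdet_pos x hx).ne')]
    congr 1
    ext y
    by_cases hy : y ∈ gradW φ '' cube d <;> simp [hy, hp, det_hessOp]
  · rintro _ ⟨x, hx, rfl⟩
    rw [hp_gradW x hx, ← one_div_one_div (M ^ d), ← one_div_pow]
    exact one_div_le_one_div_of_le (by positivity) (hdet_ge x hx)
  · rintro _ ⟨x, hx, rfl⟩
    rw [hp_gradW x hx, one_div_pow]
    exact one_div_le_one_div_of_le (hdet_pos x hx) (det_hessMat_le_pow hφ hx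
      (fun v => (by positivity : (0:ℝ) ≤ 1 / M * ‖v‖ ^ 2).trans (hconv x hx v)) (hupper x hx))

end
end
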